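/- For q not a root of unity, the subspaces V_{q,s} = span{v_s, F v_s} ⊆ V_q^{⊗k} are 2-dimensional irreducible U_q(gl(1|1))-submodules, and V_q^{⊗k} is their direct sum over all subsets s ⊆ {1,...,k−1}; equivalently V_q^{⊗k} ≅ ⊕_{ℓ=0}^{k−1} (k−1 choose ℓ) L_q[ℓ+1, k−1−ℓ]. -/

import Mathlib

noncomputable section

/-- `V_q^{⊗k}` for the two-dimensional `U_q(gl(1|1))`-module `V_q = ℂx ⊕ ℂy`,
realized as functions on words `w : Fin k → Bool` (`false` = `x`, `true` = `y`). -/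
abbrev TensorVq (k : ℕ) : Type := (Fin k → Bool) → ℂ

/-- The sign `(-1)^{#odd factors strictly before position i}` coming from `σ`. -/
def qSgn {k : ℕ} (w : Fin k → Bool) (i : Fin k) : ℂ :=
  (-1 : ℂ) ^ (Finset.univ.filter (fun j => j < i ∧ w j = true)).card

/-- The action of `E` on `V_q^{⊗k}` via the coproduct `Δ(E) = E ⊗ K⁻¹ + σ ⊗ E`:
`E` acts at position `i` with coefficient `(-1)^{#y before i} q^{-(k-1-i)}`. -/
def QEop (k : ℕ) (q : ℂ) : TensorVq k →ₗ[ℂ] TensorVq k :=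
  LinearMap.pi fun w =>
    ∑ i ∈ Finset.univ.filter (fun i => w i = false),
      (qSgn w i * q⁻¹ ^ (k - 1 - (i : ℕ))) •
        LinearMap.proj (R := ℂ) (φ := fun _ => ℂ) (Function.update w i true)

/-- The action of `F` on `V_q^{⊗k}` via the coproduct `Δ(F) = F ⊗ 1 + σK ⊗ F`:
`F` acts at position `i` with coefficient `(-1)^{#y before i} q^{i}`. -/
def QFop (k : ℕ) (q : ℂ) : TensorVq k →ₗ[ℂ] TensorVq k :=
  LinearMap.pi fun w =>
    ∑ i ∈ Finset.univ.filter (fun i => w i = true),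
      (qSgn w i * q ^ (i : ℕ)) •
        LinearMap.proj (R := ℂ) (φ := fun _ => ℂ) (Function.update w i false)

/-- The action of `q^{h₁}` on `V_q^{⊗k}`: a word is scaled by `q^{#x's}`. -/
def QH1op (k : ℕ) (q : ℂ) : TensorVq k →ₗ[ℂ] TensorVq k :=
  LinearMap.pi fun w =>
    (q ^ (Finset.univ.filter (fun i => w i = false)).card) •
      LinearMap.proj (R := ℂ) (φ := fun _ => ℂ) w

/-- The action of `q^{h₂}` on `V_q^{⊗k}`: a word is scaled by `q^{#y's}`. -/
def QH2op (k : ℕ) (q : ℂ) : TensorVq k →ₗ[ℂ] TensorVq k :=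
  LinearMap.pi fun w =>
    (q ^ (Finset.univ.filter (fun i => w i = true)).card) •
      LinearMap.proj (R := ℂ) (φ := fun _ => ℂ) w

/-- The action of `σ` on `V_q^{⊗k}`: a word is scaled by `(-1)^{#y's}`. -/
def QSop (k : ℕ) : TensorVq k →ₗ[ℂ] TensorVq k :=
  LinearMap.pi fun w =>
    ((-1 : ℂ) ^ (Finset.univ.filter (fun i => w i = true)).card) •
      LinearMap.proj (R := ℂ) (φ := fun _ => ℂ) w

/-- The standard basis vector of `V_q^{⊗k}` indexed by the word `w`. -/
def qbv {k : ℕ} (w : Fin k → Bool) : TensorVq k := fun w' => if w' = w then 1 else 0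

/-- The word of `y ⊗ u_s ∈ V_q^{⊗(n+1)}`, where `u_s = u₁⊗⋯⊗u_n` has `u_i = x`
iff `i ∈ s`. -/
def qwordOf {n : ℕ} (s : Finset (Fin n)) : Fin (n + 1) → Bool :=
  Fin.cons true (fun j => if j ∈ s then false else true)

/-- The highest weight vector `v_s = E · (y ⊗ u_s) ∈ V_q^{⊗(n+1)}`. -/
def qvStd {n : ℕ} (q : ℂ) (s : Finset (Fin n)) : TensorVq (n + 1) :=
  QEop (n + 1) q (qbv (qwordOf s))

end

/-- The subspace `V_{q,s} = span{v_s, F·v_s} ⊆ V_q^{⊗(n+1)}`. -/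
noncomputable def QVsub {n : ℕ} (q : ℂ) (s : Finset (Fin n)) :
    Submodule ℂ (TensorVq (n + 1)) :=
  Submodule.span ℂ {qvStd q s, QFop (n + 1) q (qvStd q s)}

/-!
The tensor power is a module over a Clifford algebra: `E = ∑ᵢ cᵢ Eᵢ` and `F = ∑ᵢ dᵢ Fᵢ`, where
`Eᵢ, Fᵢ` act on the `i`-th factor with a Koszul sign, and these local operators satisfy the
canonical anticommutation relations. Hence `E² = 0` and `EF + FE = [k]`, so `E v_s = 0` and
`E F v_s = [k] v_s`, where `[k] ≠ 0` because `q` is not a root of unity.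

The `v_s` are linearly independent, since `v_s` is the only one with a nonzero coefficient on
`x ⊗ u_s`. Applying `E` sends `F v_s` to `[k] v_s` and kills the `v_s`, so the `2^k` vectors
`v_s, F v_s` are independent and form a basis; this gives the direct sum. A nonzero
`E, F`-stable subspace of `span{v_s, F v_s}` contains `v_s` (apply `E` if necessary), hence also
`F v_s`.
-/

section Anticommutator

variable {K A ι : Type*} [CommSemiring K] [Semiring A] [Algebra K A]

theorem sum_smul_mul_add_mul_sum_smul (s : Finset ι) (a b : ι → A) (c d : ι → K) :
    (∑ i ∈ s, c i • a i) * (∑ j ∈ s, d j • b j) + (∑ j ∈ s, d j • b j) * (∑ i ∈ s, c i • a i) =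
      ∑ i ∈ s, ∑ j ∈ s, (c i * d j) • (a i * b j + b j * a i) := by
  rw [Finset.sum_mul_sum, Finset.sum_mul_sum, Finset.sum_comm (s := s) (t := s)
    (f := fun j i => d j • b j * c i • a i), ← Finset.sum_add_distrib]
  refine Finset.sum_congr rfl fun i _ => ?_
  rw [← Finset.sum_add_distrib]
  refine Finset.sum_congr rfl fun j _ => ?_
  rw [smul_add, smul_mul_smul_comm, smul_mul_smul_comm, mul_comm (d j)]

end Anticommutator

section PairDecomposition

variable {K M ι : Type*} [Field K] [AddCommGroup M] [Module K M]

theorem LinearIndependent.sum_elim_comp_of_eq_zero_of_comp_eq_smul {E F : M →ₗ[K] M}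
    {v : ι → M} {c : K} (hc : c ≠ 0) (hv : LinearIndependent K v) (hE : ∀ i, E (v i) = 0)
    (hEF : ∀ i, E (F (v i)) = c • v i) : LinearIndependent K (Sum.elim v (F ∘ v)) := by
  have hFv : LinearIndependent K (F ∘ v) := by
    refine LinearIndependent.of_comp E ?_
    convert hv.units_smul fun _ => Units.mk0 c hc using 1
    funext i
    simp [hEF]
  refine hv.sum_type hFv ?_
  rw [Set.range_comp, Submodule.span_image, Submodule.disjoint_def]
  rintro _ hx ⟨y, hy, rfl⟩
  have hE_span : ∀ z ∈ Submodule.span K (Set.range v), E z = 0 := fun z hz =>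
    Submodule.span_le (p := LinearMap.ker E) |>.2 (by rintro _ ⟨i, rfl⟩; exact hE i) hz
  have hEF_span : ∀ z ∈ Submodule.span K (Set.range v), E (F z) = c • z := fun z hz =>
    sub_eq_zero.1 <| LinearMap.mem_ker.1 <|
      Submodule.span_le (p := LinearMap.ker (E ∘ₗ F - c • LinearMap.id)) |>.2
        (by rintro _ ⟨i, rfl⟩; simp [hEF]) hz
  have hy0 : y = 0 := by
    have := hEF_span y hy
    rw [hE_span _ hx, eq_comm, smul_eq_zero] at this
    exact this.resolve_left hc
  simp [hy0]

theorem eq_span_pair_of_invariant {E F : M →ₗ[K] M} {v : M} {c : K} (hc : c ≠ 0) (hE : E v = 0)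
    (hEF : E (F v) = c • v) {N : Submodule K M} (hle : N ≤ Submodule.span K {v, F v})
    (hNE : ∀ x ∈ N, E x ∈ N) (hNF : ∀ x ∈ N, F x ∈ N) (hN : N ≠ ⊥) :
    N = Submodule.span K {v, F v} := by
  obtain ⟨x, hxN, hx0⟩ := Submodule.exists_mem_ne_zero_of_ne_bot hN
  obtain ⟨a, b, rfl⟩ := Submodule.mem_span_pair.1 (hle hxN)
  have hv : v ∈ N := by
    by_cases hb : b = 0
    · have ha : a ≠ 0 := by rintro rfl; simp [hb] at hx0
      simpa [hb, Submodule.smul_mem_iff _ ha] using hxN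
    · have hEx := hNE _ hxN
      rw [map_add, map_smul, map_smul, hE, hEF, smul_zero, zero_add, smul_smul,
        Submodule.smul_mem_iff _ (mul_ne_zero hb hc)] at hEx
      exact hEx
  refine le_antisymm hle (Submodule.span_le.2 ?_)
  rintro _ (rfl | rfl)
  exacts [hv, hNF _ hv]

end PairDecomposition

section SpanPairs

variable {R M ι : Type*} [Ring R] [AddCommGroup M] [Module R M] {v w : ι → M}

theorem finrank_span_pair_of_linearIndependent_sum_elim [StrongRankCondition R]
    (hli : LinearIndependent R (Sum.elim v w)) (i : ι) :
    Module.finrank R (Submodule.span R {v i, w i}) = 2 := by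
  have := nontrivial_of_invariantBasisNumber R
  have hpair : LinearIndependent R ![v i, w i] := by
    convert hli.comp ![Sum.inl i, Sum.inr i] (by
      intro a b; fin_cases a <;> fin_cases b <;> simp) using 1
    funext a; fin_cases a <;> rfl
  rw [← Matrix.range_cons_cons_empty _ _ ![], finrank_span_eq_card hpair, Fintype.card_fin]

theorem isInternal_span_pair_of_linearIndependent_sum_elim [DecidableEq ι]
    (hli : LinearIndependent R (Sum.elim v w))
    (hspan : Submodule.span R (Set.range (Sum.elim v w)) = ⊤) :
    DirectSum.IsInternal fun i => Submodule.span R {v i, w i} := by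
  have hblock : ∀ i, Submodule.span R {v i, w i} =
      Submodule.span R (Sum.elim v w '' {Sum.inl i, Sum.inr i}) := by
    intro i; rw [Set.image_pair]; rfl
  refine DirectSum.isInternal_submodule_of_iSupIndep_of_iSup_eq_top (fun i => ?_) ?_
  · rw [hblock]
    refine (hli.disjoint_span_image disjoint_compl_right).mono_right (iSup₂_le fun j hj => ?_)
    rw [hblock]
    refine Submodule.span_mono (Set.image_mono ?_)
    rintro _ (rfl | rfl) <;> simp [hj]
  · rw [eq_top_iff, ← hspan, Submodule.span_le]
    rintro _ ⟨j | j, rfl⟩ <;> refine (le_iSup (fun i => Submodule.span R {v i, w i}) j) ?_ <;>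
      exact Submodule.subset_span (by simp)

end SpanPairs

section SignedFlip

open Function

variable {k : ℕ}

theorem qSgn_eq_prod (w : Fin k → Bool) (j : Fin k) :
    qSgn w j = ∏ l, if l < j ∧ w l = true then (-1 : ℂ) else 1 := by
  rw [qSgn, ← Finset.prod_const, Finset.prod_filter]

theorem qSgn_update_mul (w : Fin k → Bool) (i j : Fin k) (c : Bool) :
    qSgn (update w i c) j * (if i < j ∧ w i = true then -1 else 1) =
      (if i < j ∧ c = true then -1 else 1) * qSgn w j := by
  simp only [qSgn_eq_prod]
  rw [← Finset.mul_prod_erase _ _ (Finset.mem_univ i),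
    ← Finset.mul_prod_erase _ (fun l => if l < j ∧ w l = true then (-1 : ℂ) else 1)
      (Finset.mem_univ i), update_self]
  have hrest : ∀ l ∈ Finset.univ.erase i,
      (if l < j ∧ update w i c l = true then (-1 : ℂ) else 1) =
        if l < j ∧ w l = true then -1 else 1 := fun l hl => by
    rw [update_of_ne (Finset.ne_of_mem_erase hl)]
  rw [Finset.prod_congr rfl hrest]
  ring

theorem qSgn_update_self (w : Fin k → Bool) (i : Fin k) (c : Bool) :
    qSgn (update w i c) i = qSgn w i := by
  simpa using qSgn_update_mul w i i c

theorem qSgn_update_not (w : Fin k → Bool) (i j : Fin k) :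
    qSgn (update w i (!w i)) j = (if i < j then -1 else 1) * qSgn w j := by
  have h := qSgn_update_mul w i j (!w i)
  by_cases hij : i < j <;> cases hw : w i <;> simp_all; linear_combination -h

theorem qSgn_mul_self (w : Fin k → Bool) (i : Fin k) : qSgn w i * qSgn w i = 1 := by
  rw [qSgn, ← pow_add, Even.neg_one_pow ⟨_, rfl⟩]

/-- `E` (for `b = false`) or `F` (for `b = true`) acting on the `i`-th tensor factor alone,
with the Koszul sign of the odd letters in front of it. -/
def signedFlip (b : Bool) (i : Fin k) : Module.End ℂ (TensorVq k) :=
  LinearMap.pi fun w =>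
    if w i = b then qSgn w i • LinearMap.proj (R := ℂ) (φ := fun _ => ℂ) (update w i (!b))
    else 0

theorem signedFlip_apply (b : Bool) (i : Fin k) (f : TensorVq k) (w : Fin k → Bool) :
    signedFlip b i f w = if w i = b then qSgn w i * f (update w i (!b)) else 0 := by
  unfold signedFlip
  split_ifs <;> simp [*]

theorem signedFlip_anticomm (b b' : Bool) (i j : Fin k) :
    signedFlip b i * signedFlip b' j + signedFlip b' j * signedFlip b i =
      if i = j ∧ b ≠ b' then 1 else 0 := by
  refine LinearMap.ext fun f => funext fun w => ?_
  simp only [LinearMap.add_apply, Module.End.mul_apply, Pi.add_apply, signedFlip_apply]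
  rcases eq_or_ne i j with rfl | hij
  · simp only [update_self, update_idem, qSgn_update_self]
    cases b <;> cases b' <;> cases hw : w i <;> simp [← mul_assoc, qSgn_mul_self] <;>
      rw [← hw, update_eq_self]
  · simp only [update_of_ne hij, update_of_ne hij.symm, hij, false_and, if_false,
      LinearMap.zero_apply, Pi.zero_apply]
    by_cases hb : w i = b
    · by_cases hb' : w j = b'
      · subst hb hb'
        simp only [if_true, qSgn_update_not, update_comm hij]
        rcases hij.lt_or_gt with h | h
        · simp only [h, h.not_gt, if_true, if_false]; ring
        · simp only [h, h.not_gt, if_true, if_false]; ring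
      · simp [hb']
    · simp [hb]

end SignedFlip

theorem QEop_eq_sum (k : ℕ) (q : ℂ) :
    QEop k q = ∑ i : Fin k, q⁻¹ ^ (k - 1 - (i : ℕ)) • signedFlip false i := by
  refine LinearMap.ext fun f => funext fun w => ?_
  simp only [QEop, Finset.sum_filter, LinearMap.pi_apply, LinearMap.sum_apply,
    Finset.sum_apply, LinearMap.smul_apply]
  refine Finset.sum_congr rfl fun i _ => ?_
  split_ifs <;> simp [signedFlip_apply, *]; ring

theorem QFop_eq_sum (k : ℕ) (q : ℂ) :
    QFop k q = ∑ i : Fin k, q ^ (i : ℕ) • signedFlip true i := by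
  refine LinearMap.ext fun f => funext fun w => ?_
  simp only [QFop, Finset.sum_filter, LinearMap.pi_apply, LinearMap.sum_apply,
    Finset.sum_apply, LinearMap.smul_apply]
  refine Finset.sum_congr rfl fun i _ => ?_
  split_ifs <;> simp [signedFlip_apply, *]; ring

theorem QEop_mul_self (k : ℕ) (q : ℂ) : QEop k q * QEop k q = 0 := by
  have h := sum_smul_mul_add_mul_sum_smul Finset.univ (signedFlip (k := k) false)
    (signedFlip false) (fun i => q⁻¹ ^ (k - 1 - (i : ℕ))) (fun i => q⁻¹ ^ (k - 1 - (i : ℕ)))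
  simp only [← QEop_eq_sum, signedFlip_anticomm, ne_eq, not_true_eq_false, and_false,
    if_false, smul_zero, Finset.sum_const_zero, ← two_smul ℂ] at h
  exact (smul_eq_zero.1 h).resolve_left two_ne_zero

/-- The balanced quantum integer `[k] = q^{1-k} + q^{3-k} + ⋯ + q^{k-1}`. -/
noncomputable def quantumInt (k : ℕ) (q : ℂ) : ℂ :=
  ∑ i : Fin k, q⁻¹ ^ (k - 1 - (i : ℕ)) * q ^ (i : ℕ)

theorem QEop_mul_QFop_add (k : ℕ) (q : ℂ) :
    QEop k q * QFop k q + QFop k q * QEop k q = quantumInt k q • 1 := by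
  have h := sum_smul_mul_add_mul_sum_smul Finset.univ (signedFlip (k := k) false)
    (signedFlip true) (fun i => q⁻¹ ^ (k - 1 - (i : ℕ))) (fun i => q ^ (i : ℕ))
  rw [← QEop_eq_sum, ← QFop_eq_sum] at h
  rw [h]
  simp only [signedFlip_anticomm, ne_eq, Bool.false_eq_true, not_false_eq_true, and_true,
    smul_ite, smul_zero, Finset.sum_ite_eq, Finset.mem_univ, if_true, quantumInt,
    Finset.sum_smul]

theorem pow_pred_mul_quantumInt {q : ℂ} (hq : q ≠ 0) (k : ℕ) :
    q ^ (k - 1) * quantumInt k q = ∑ i ∈ Finset.range k, (q ^ 2) ^ i := by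
  rw [quantumInt, Finset.mul_sum, Fin.sum_univ_eq_sum_range
    (fun i => q ^ (k - 1) * (q⁻¹ ^ (k - 1 - i) * q ^ i))]
  refine Finset.sum_congr rfl fun i hi => ?_
  have hik : i ≤ k - 1 := by have := Finset.mem_range.1 hi; omega
  obtain ⟨m, hm⟩ := Nat.exists_eq_add_of_le hik
  rw [hm, Nat.add_sub_cancel_left, pow_add, inv_pow]
  field_simp
  ring

theorem quantumInt_ne_zero {q : ℂ} (hq : q ≠ 0) {k : ℕ} (hk : q ^ (2 * k) ≠ 1) :
    quantumInt k q ≠ 0 := by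
  intro h
  have hgeom := mul_geom_sum (q ^ 2) k
  rw [← pow_pred_mul_quantumInt hq, h, mul_zero, mul_zero, eq_comm, sub_eq_zero,
    ← pow_mul] at hgeom
  exact hk hgeom

theorem QEop_qvStd {n : ℕ} (q : ℂ) (s : Finset (Fin n)) : QEop (n + 1) q (qvStd q s) = 0 := by
  rw [qvStd, ← Module.End.mul_apply, QEop_mul_self, LinearMap.zero_apply]

theorem QEop_QFop_qvStd {n : ℕ} (q : ℂ) (s : Finset (Fin n)) :
    QEop (n + 1) q (QFop (n + 1) q (qvStd q s)) = quantumInt (n + 1) q • qvStd q s := by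
  have h := congrArg (fun T : Module.End ℂ (TensorVq (n + 1)) => T (qvStd q s))
    (QEop_mul_QFop_add (n + 1) q)
  simpa [QEop_qvStd] using h

/-- The word of `x ⊗ u_s`. -/
def xWordOf {n : ℕ} (s : Finset (Fin n)) : Fin (n + 1) → Bool :=
  Fin.cons false fun j => if j ∈ s then false else true

theorem update_xWordOf_zero {n : ℕ} (s : Finset (Fin n)) :
    Function.update (xWordOf s) 0 true = qwordOf s := by
  refine funext fun j => Fin.cases ?_ (fun j => ?_) j
  · simp [qwordOf]
  · simp [xWordOf, qwordOf]

theorem qwordOf_injective {n : ℕ} : Function.Injective (qwordOf (n := n)) := by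
  intro s t h
  ext j
  simpa [qwordOf] using congrFun h j.succ

theorem qvStd_apply_xWordOf {n : ℕ} (q : ℂ) (s t : Finset (Fin n)) :
    qvStd q t (xWordOf s) = if s = t then q⁻¹ ^ n else 0 := by
  have hx0 : xWordOf s 0 = false := rfl
  have hqSgn : qSgn (xWordOf s) 0 = 1 := by simp [qSgn]
  have hoff : ∀ i : Fin (n + 1), i ≠ 0 →
      qbv (qwordOf t) (Function.update (xWordOf s) i true) = 0 := fun i hi => by
    rw [qbv, if_neg]
    intro h
    simpa [Function.update_of_ne hi.symm, xWordOf, qwordOf] using congrFun h 0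
  rw [qvStd, QEop_eq_sum, LinearMap.sum_apply, Finset.sum_apply, Finset.sum_eq_single 0]
  · simp [signedFlip_apply, hx0, hqSgn, update_xWordOf_zero, qbv, qwordOf_injective.eq_iff]
  · intro i _ hi
    simp [signedFlip_apply, hoff i hi]
  · simp

theorem linearIndependent_qvStd {n : ℕ} {q : ℂ} (hq : q ≠ 0) :
    LinearIndependent ℂ (qvStd (n := n) q) := by
  refine LinearIndependent.of_comp (LinearMap.funLeft ℂ ℂ xWordOf) ?_
  convert (Pi.linearIndependent_single_one (Finset (Fin n)) ℂ).units_smul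
    fun _ => Units.mk0 (q⁻¹ ^ n) (by simp [hq]) using 1
  funext t
  funext s
  simp [LinearMap.funLeft_apply, qvStd_apply_xWordOf, Pi.single_apply]

/-- For `q` not a root of unity, the subspaces `V_{q,s} = span{v_s, F v_s}` are
2-dimensional irreducible `U_q(gl(1|1))`-submodules, and `V_q^{⊗k}` (`k = n+1`)
is their internal direct sum over subsets `s ⊆ {1,…,k-1}`; the number of summands
with `|s| = ℓ` (i.e. isomorphic to `L_q[ℓ+1,k-1-ℓ]`) is `(k-1 choose ℓ)`. -/
theorem q_tensor_decomposition (n : ℕ) (q : ℂ) (hq : q ≠ 0)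
    (hroot : ∀ m : ℕ, 0 < m → q ^ m ≠ 1) :
    DirectSum.IsInternal (fun s : Finset (Fin n) => QVsub q s) ∧
    (∀ s : Finset (Fin n), Module.finrank ℂ (QVsub q s) = 2) ∧
    (∀ s : Finset (Fin n), ∀ N : Submodule ℂ (TensorVq (n + 1)), N ≤ QVsub q s →
      (∀ x ∈ N, QEop (n + 1) q x ∈ N) → (∀ x ∈ N, QFop (n + 1) q x ∈ N) →
      (∀ x ∈ N, QH1op (n + 1) q x ∈ N) → (∀ x ∈ N, QH2op (n + 1) q x ∈ N) →
      (∀ x ∈ N, QSop (n + 1) x ∈ N) →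
      N ≠ ⊥ → N = QVsub q s) ∧
    (∀ ℓ : ℕ, ((Finset.univ : Finset (Finset (Fin n))).filter
      (fun s => s.card = ℓ)).card = n.choose ℓ) := by
  have hc : quantumInt (n + 1) q ≠ 0 := quantumInt_ne_zero hq (hroot _ (by positivity))
  have hli : LinearIndependent ℂ (Sum.elim (qvStd q) (QFop (n + 1) q ∘ qvStd q)) :=
    (linearIndependent_qvStd hq).sum_elim_comp_of_eq_zero_of_comp_eq_smul hc (QEop_qvStd q)
      (QEop_QFop_qvStd q)
  have hspan := hli.span_eq_top_of_card_eq_finrank' (by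
    simp [Module.finrank_fintype_fun_eq_card, Fintype.card_finset, pow_succ, mul_two])
  refine ⟨isInternal_span_pair_of_linearIndependent_sum_elim hli hspan,
    finrank_span_pair_of_linearIndependent_sum_elim hli,
    fun s N hle hNE hNF _ _ _ hN =>
      eq_span_pair_of_invariant hc (QEop_qvStd q s) (QEop_QFop_qvStd q s) hle hNE hNF hN,
    fun ℓ => ?_⟩
  rw [← Finset.powerset_univ, ← Finset.powersetCard_eq_filter, Finset.card_powersetCard,
    Finset.card_univ, Fintype.card_fin]
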